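/- arXiv:2107.11271 — 2 statements merged into one kernel-verified Lean document; each statement's English description precedes it below -/
import Mathlib

section
/- Let (C_n) be an element of the inverse limit of a FASO for X converging to {x} in the Hausdorff metric. Then X_*^n ⊆ C_n for every n; i.e., the thread (X_*^n) associated to x is minimal among threads converging to x. -/
open Metric Set Filter

/-- The FASO bonding map at one level: `q(C) = ⋃_{c ∈ C} B(c,ε) ∩ A`. -/
def qmap {X : Type*} [MetricSpace X] (ε : ℝ) (A : Set X) (C : Set X) : Set X :=
  ⋃ c ∈ C, Metric.ball c ε ∩ A

/-- Iterated bonding maps: `qdown ε A n k` is `q_{n, n+k}`, mapping subsets at level `n+k`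
down to subsets at level `n`. -/
def qdown {X : Type*} [MetricSpace X] (ε : ℕ → ℝ) (A : ℕ → Set X) (n : ℕ) :
    ℕ → Set X → Set X
  | 0, C => C
  | k + 1, C => qdown ε A n k (qmap (ε (n + k)) (A (n + k)) C)

/-- `A_m(x)`: the set of nearest points of `A` to `x`. -/
def nearestPts {X : Type*} [MetricSpace X] (x : X) (A : Set X) : Set X :=
  {a ∈ A | dist x a = Metric.infDist x A}

/-- `X_*^n = ⋃_{m > n} q_{n,m}(A_m(x))`. -/
def Xstar {X : Type*} [MetricSpace X] (ε : ℕ → ℝ) (A : ℕ → Set X) (x : X) (n : ℕ) :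
    Set X :=
  ⋃ m, ⋃ (_ : n < m), qdown ε A n (m - n) (nearestPts x (A m))

theorem qmap_mono {X : Type*} [MetricSpace X] (ε : ℝ) (A : Set X) {C D : Set X}
    (h : C ⊆ D) : qmap ε A C ⊆ qmap ε A D := by
  intro y hy
  simp only [qmap, mem_iUnion] at hy ⊢
  obtain ⟨c, hc, hy⟩ := hy
  exact ⟨c, h hc, hy⟩

theorem qdown_mono {X : Type*} [MetricSpace X] (ε : ℕ → ℝ) (A : ℕ → Set X) (n : ℕ)
    (k : ℕ) {C D : Set X} (h : C ⊆ D) : qdown ε A n k C ⊆ qdown ε A n k D := by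
  induction k generalizing C D with
  | zero => exact h
  | succ k ih => exact ih (qmap_mono _ _ h)

/-- Minimality: if a thread `(C_n)` of a FASO converges to `{x}` in the Hausdorff metric,
then `X_*^n ⊆ C_n` for every `n`. -/
theorem stmt_13 {X : Type*} [MetricSpace X] [CompactSpace X] [Nonempty X]
    (ε : ℕ → ℝ) (A : ℕ → Set X) (γ : ℕ → ℝ)
    (hεpos : ∀ n, 0 < ε n)
    (hεlim : Filter.Tendsto ε Filter.atTop (nhds 0))
    (hAfin : ∀ n, (A n).Finite)
    (hApprox : ∀ n, ∀ x : X, ∃ a ∈ A n, dist x a < ε n)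
    (hγ : ∀ n, IsLUB (Set.range fun x : X => Metric.infDist x (A n)) (γ n))
    (hrec : ∀ n, ε (n + 1) < (ε n - γ n) / 2)
    (C : ℕ → Set X)
    (hCsub : ∀ n, C n ⊆ A n) (hCne : ∀ n, (C n).Nonempty)
    (hCdiam : ∀ n, Metric.diam (C n) < 4 * ε n)
    (hthread : ∀ n, qmap (ε n) (A n) (C (n + 1)) = C n)
    (x : X)
    (hconv : Filter.Tendsto (fun n => Metric.hausdorffDist (C n) {x})
      Filter.atTop (nhds 0)) :
    ∀ n, Xstar ε A x n ⊆ C n := by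
  -- γ is nonnegative
  have hγnn : ∀ n, 0 ≤ γ n := by
    intro n
    obtain ⟨x0⟩ := ‹Nonempty X›
    exact le_trans (Metric.infDist_nonneg) ((hγ n).1 (mem_range_self x0))
  -- γ n ≤ ε n (in fact 2 ε (n+1) ≤ ε n - γ n)
  have hεhalf : ∀ n, 2 * ε (n + 1) ≤ ε n - γ n := fun n => by
    have := hrec n; linarith
  -- iterated thread property
  have hqdownC : ∀ n k, qdown ε A n k (C (n + k)) = C n := by
    intro n k
    induction k with
    | zero => rfl
    | succ k ih =>
      show qdown ε A n k (qmap (ε (n + k)) (A (n + k)) (C (n + k + 1))) = C n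
      rw [hthread (n + k), ih]
  -- chain: from any point of C k we can reach C (k + j) within distance < 2 ε k
  have hchain : ∀ j k, ∀ c ∈ C k, ∃ c' ∈ C (k + j), dist c c' < 2 * ε k := by
    intro j
    induction j with
    | zero =>
      intro k c hc
      exact ⟨c, hc, by rw [dist_self]; linarith [hεpos k]⟩
    | succ j ih =>
      intro k c hc
      rw [← hthread k] at hc
      simp only [qmap, mem_iUnion] at hc
      obtain ⟨c1, hc1, hball, -⟩ := hc
      obtain ⟨c', hc', hd⟩ := ih (k + 1) c1 hc1
      refine ⟨c', by rwa [show k + 1 + j = k + (j + 1) by omega] at hc', ?_⟩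
      have h1 : dist c c1 < ε k := Metric.mem_ball.mp hball
      have h2 : 2 * ε (k + 1) ≤ ε k := le_trans (hεhalf k) (by have := hγnn k; linarith)
      calc dist c c' ≤ dist c c1 + dist c1 c' := dist_triangle _ _ _
        _ < ε k + ε k := by linarith
        _ = 2 * ε k := by ring
  -- Hausdorff edist finiteness
  have hne : ∀ k, EMetric.hausdorffEdist (C k) ({x} : Set X) ≠ ⊤ := by
    intro k
    exact Metric.hausdorffEdist_ne_top_of_nonempty_of_bounded (hCne k)
      (singleton_nonempty x)
      (IsCompact.isBounded isCompact_univ |>.subset (subset_univ _))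
      (IsCompact.isBounded isCompact_univ |>.subset (subset_univ _))
  -- every point of C k is within 2 ε k of x
  have hdistx : ∀ k, ∀ c ∈ C k, dist x c ≤ 2 * ε k := by
    intro k c hc
    have hle : ∀ j : ℕ, dist x c ≤ Metric.hausdorffDist (C (j + k)) ({x} : Set X) + 2 * ε k := by
      intro j
      obtain ⟨c', hc', hd⟩ := hchain j k c hc
      rw [show k + j = j + k by omega] at hc'
      have h1 : dist c' x ≤ Metric.hausdorffDist (C (j + k)) ({x} : Set X) := by
        have := Metric.infDist_le_hausdorffDist_of_mem hc' (hne (j + k))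
        simpa [Metric.infDist_singleton] using this
      calc dist x c ≤ dist x c' + dist c' c := dist_triangle _ _ _
        _ ≤ Metric.hausdorffDist (C (j + k)) ({x} : Set X) + 2 * ε k := by
            rw [dist_comm x c', dist_comm c' c]; linarith
    have htend : Filter.Tendsto
        (fun j : ℕ => Metric.hausdorffDist (C (j + k)) ({x} : Set X) + 2 * ε k)
        Filter.atTop (nhds (0 + 2 * ε k)) :=
      Filter.Tendsto.add (hconv.comp (tendsto_add_atTop_nat k)) tendsto_const_nhds
    have := ge_of_tendsto' htend hle
    linarith
  -- nearest points at level m lie in C m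
  have hkey : ∀ m, nearestPts x (A m) ⊆ C m := by
    intro m a ha
    obtain ⟨haA, hax⟩ := ha
    obtain ⟨c, hc⟩ := hCne (m + 1)
    rw [← hthread m]
    simp only [qmap, mem_iUnion]
    refine ⟨c, hc, ?_, haA⟩
    have h1 : Metric.infDist x (A m) ≤ γ m := (hγ m).1 (mem_range_self x)
    have h2 : dist x c ≤ 2 * ε (m + 1) := hdistx (m + 1) c hc
    have h3 : 2 * ε (m + 1) < ε m - γ m := by have := hrec m; linarith
    have : dist a c < ε m := by
      calc dist a c ≤ dist a x + dist x c := dist_triangle _ _ _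
        _ = dist x a + dist x c := by rw [dist_comm]
        _ < ε m := by rw [hax]; linarith
    exact Metric.mem_ball.mpr this
  intro n y hy
  simp only [Xstar, mem_iUnion] at hy
  obtain ⟨m, hm, hy⟩ := hy
  have h1 : qdown ε A n (m - n) (nearestPts x (A m)) ⊆ qdown ε A n (m - n) (C m) :=
    qdown_mono ε A n (m - n) (hkey m)
  have h2 : qdown ε A n (m - n) (C m) = C n := by
    have := hqdownC n (m - n)
    rwa [show n + (m - n) = m by omega] at this
  exact h2 ▸ h1 hy
end

section
/- Uniqueness of FASO up to pro-homotopy: if (U_{4ε_n}(A_n), q_{n,n+1}) and (U_{4δ_n}(B_n), q'_{n,n+1}) are two FASOs for the same compact metric space X, then the maps I_n : U_{4δ_{I(n)}}(B_{I(n)}) → U_{4ε_n}(A_n), I_n(C) = ⋃_{x∈C} B(x,ε_n) ∩ A_n, with I(n) = min{l : δ_l < ε_n/16}, are well-defined and continuous, and for m ≥ n the maps I_n ∘ q'_{I(n),I(m)} and q_{n,m} ∘ I_m are homotopic (their pointwise union has diameter < 4ε_n, giving a common upper bound in the poset U_{4ε_n}(A_n)). -/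
open Metric Set Filter

/-
Every point of `I_n(q'(C))` or of `q(I_m(C))` lies close to the finite set `C`. One step of a
bonding map moves points by less than the current radius, and the radii at least halve at each
level (`ε_{n+1} < (ε_n - γ_n)/2` with `γ_n ≥ 0`), so a chain of bonding maps from level `n + k`
down to level `n` moves points by at most `2ε_n - 2ε_{n+k}`. Both composites therefore land
within `2ε_n - 2δ_{I(m)}` of `C`, and their union has diameter at most
`4ε_n - 4δ_{I(m)} + diam C < 4ε_n`.
-/

section BondingMaps

variable {X : Type*} [MetricSpace X]

theorem qmap_subset (ε : ℝ) (A C : Set X) : qmap ε A C ⊆ A :=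
  iUnion₂_subset fun _ _ => inter_subset_right

theorem qmap_mono_s19 (ε : ℝ) (A : Set X) : Monotone (qmap ε A) :=
  fun _ _ h => biUnion_subset_biUnion_left h

theorem exists_dist_lt_of_mem_qmap {ε : ℝ} {A C : Set X} {y : X} (hy : y ∈ qmap ε A C) :
    ∃ c ∈ C, dist y c < ε := by
  simp only [qmap, mem_iUnion₂, mem_inter_iff, mem_ball] at hy
  obtain ⟨c, hc, hyc, -⟩ := hy
  exact ⟨c, hc, hyc⟩

theorem qmap_nonempty {ε : ℝ} {A C : Set X} (hA : ∀ x, ∃ a ∈ A, dist x a < ε)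
    (hC : C.Nonempty) : (qmap ε A C).Nonempty := by
  obtain ⟨c, hc⟩ := hC
  obtain ⟨a, ha, hca⟩ := hA c
  exact ⟨a, mem_biUnion hc ⟨mem_ball.2 (dist_comm a c ▸ hca), ha⟩⟩

theorem diam_le_of_forall_exists_dist_le {C S : Set X} {ρ : ℝ} (hC : Bornology.IsBounded C)
    (hρ : 0 ≤ ρ) (h : ∀ y ∈ S, ∃ c ∈ C, dist y c ≤ ρ) : diam S ≤ 2 * ρ + diam C := by
  refine diam_le_of_forall_dist_le (by linarith [diam_nonneg (s := C)]) fun y hy y' hy' => ?_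
  obtain ⟨c, hc, hyc⟩ := h y hy
  obtain ⟨c', hc', hyc'⟩ := h y' hy'
  calc dist y y' ≤ dist y c + dist c c' + dist c' y' := dist_triangle4 y c c' y'
    _ ≤ ρ + diam C + ρ := by
      gcongr
      · exact dist_le_diam_of_mem hC hc hc'
      · rwa [dist_comm]
    _ = 2 * ρ + diam C := by ring

theorem diam_qmap_le {ε : ℝ} {A C : Set X} (hC : Bornology.IsBounded C) (hε : 0 ≤ ε) :
    diam (qmap ε A C) ≤ 2 * ε + diam C :=
  diam_le_of_forall_exists_dist_le hC hε fun _ hy =>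
    (exists_dist_lt_of_mem_qmap hy).imp fun _ ⟨hc, hyc⟩ => ⟨hc, hyc.le⟩

variable {ε : ℕ → ℝ} {A : ℕ → Set X}

theorem qdown_nonempty (hA : ∀ j x, ∃ a ∈ A j, dist x a < ε j) (n k : ℕ) {C : Set X}
    (hC : C.Nonempty) : (qdown ε A n k C).Nonempty := by
  induction k generalizing C with
  | zero => exact hC
  | succ k ih => exact ih (qmap_nonempty (hA (n + k)) hC)

theorem qdown_subset {n k : ℕ} {C : Set X} (hC : C ⊆ A (n + k)) : qdown ε A n k C ⊆ A n := by
  induction k generalizing C with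
  | zero => exact hC
  | succ k ih => exact ih (qmap_subset _ _ _)

theorem exists_dist_le_of_mem_qdown (hε : ∀ j, 2 * ε (j + 1) ≤ ε j) {n k : ℕ} {C : Set X}
    {y : X} (hy : y ∈ qdown ε A n k C) : ∃ c ∈ C, dist y c ≤ 2 * ε n - 2 * ε (n + k) := by
  induction k generalizing C with
  | zero => exact ⟨y, hy, by simp⟩
  | succ k ih =>
    obtain ⟨d, hd, hyd⟩ := ih hy
    obtain ⟨c, hc, hdc⟩ := exists_dist_lt_of_mem_qmap hd
    refine ⟨c, hc, ?_⟩
    rw [← add_assoc]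
    linarith [dist_triangle y d c, hε (n + k)]

variable {δ : ℕ → ℝ} {B : ℕ → Set X}

theorem diam_qmap_qdown_union_qdown_qmap_lt (hε : ∀ j, 2 * ε (j + 1) ≤ ε j)
    (hδ : ∀ j, 2 * δ (j + 1) ≤ δ j) {n m p q : ℕ} (hnm : n ≤ m) (hpq : p ≤ q)
    (hεnm : ε m ≤ ε n) (hp : 2 * δ p ≤ ε n) (hq : 2 * δ q ≤ ε m) {C : Set X}
    (hC : Bornology.IsBounded C) (hCdiam : diam C < 4 * δ q) :
    diam (qmap (ε n) (A n) (qdown δ B p (q - p) C) ∪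
      qdown ε A n (m - n) (qmap (ε m) (A m) C)) < 4 * ε n := by
  obtain ⟨k, rfl⟩ := Nat.exists_eq_add_of_le hnm
  obtain ⟨j, rfl⟩ := Nat.exists_eq_add_of_le hpq
  rw [Nat.add_sub_cancel_left, Nat.add_sub_cancel_left]
  have hδq : 0 < δ (p + j) := by linarith [diam_nonneg (s := C)]
  have hclose : ∀ y ∈ qmap (ε n) (A n) (qdown δ B p j C) ∪
      qdown ε A n k (qmap (ε (n + k)) (A (n + k)) C),
      ∃ c ∈ C, dist y c ≤ 2 * ε n - 2 * δ (p + j) := by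
    rintro y (hy | hy)
    · obtain ⟨d, hd, hyd⟩ := exists_dist_lt_of_mem_qmap hy
      obtain ⟨c, hc, hdc⟩ := exists_dist_le_of_mem_qdown hδ hd
      exact ⟨c, hc, by linarith [dist_triangle y d c]⟩
    · obtain ⟨d, hd, hyd⟩ := exists_dist_le_of_mem_qdown hε hy
      obtain ⟨c, hc, hdc⟩ := exists_dist_lt_of_mem_qmap hd
      exact ⟨c, hc, by linarith [dist_triangle y d c]⟩
  have := diam_le_of_forall_exists_dist_le hC (by linarith) hclose
  linarith

end BondingMaps

theorem IsLUB.nonneg_of_range_infDist {X : Type*} [MetricSpace X] {A : Set X} {γ : ℝ}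
    (h : IsLUB (range fun x : X => infDist x A) γ) : 0 ≤ γ := by
  obtain ⟨_, x, rfl⟩ := h.nonempty
  exact infDist_nonneg.trans (h.1 ⟨x, rfl⟩)

theorem two_mul_succ_le_of_lt_half_sub_isLUB {X : Type*} [MetricSpace X] {ε γ : ℕ → ℝ}
    {A : ℕ → Set X} (hγ : ∀ n, IsLUB (range fun x : X => infDist x (A n)) (γ n))
    (hrec : ∀ n, ε (n + 1) < (ε n - γ n) / 2) (n : ℕ) : 2 * ε (n + 1) ≤ ε n := by
  linarith [hrec n, (hγ n).nonneg_of_range_infDist]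

theorem monotone_of_isLeast_lt {δ τ : ℕ → ℝ} {I : ℕ → ℕ} (hτ : Antitone τ)
    (hI : ∀ n, δ (I n) < τ n ∧ ∀ l, δ l < τ n → I n ≤ l) : Monotone I :=
  fun n m hnm => (hI n).2 (I m) ((hI m).1.trans_le (hτ hnm))

theorem stmt_19_general {X : Type*} [MetricSpace X]
    (ε : ℕ → ℝ) (A : ℕ → Set X) (γ : ℕ → ℝ)
    (hεpos : ∀ n, 0 < ε n)
    (hApprox : ∀ n, ∀ x : X, ∃ a ∈ A n, dist x a < ε n)
    (hγ : ∀ n, IsLUB (Set.range fun x : X => Metric.infDist x (A n)) (γ n))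
    (hrec : ∀ n, ε (n + 1) < (ε n - γ n) / 2)
    (δ : ℕ → ℝ) (B : ℕ → Set X) (γ' : ℕ → ℝ)
    (hBfin : ∀ n, (B n).Finite)
    (hBApprox : ∀ n, ∀ x : X, ∃ b ∈ B n, dist x b < δ n)
    (hγ' : ∀ n, IsLUB (Set.range fun x : X => Metric.infDist x (B n)) (γ' n))
    (hrec' : ∀ n, δ (n + 1) < (δ n - γ' n) / 2)
    (I : ℕ → ℕ)
    (hI : ∀ n, δ (I n) < ε n / 16 ∧ ∀ l, δ l < ε n / 16 → I n ≤ l) :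
    (∀ n, ∀ C : Set X, C ⊆ B (I n) → C.Nonempty → Metric.diam C < 4 * δ (I n) →
        qmap (ε n) (A n) C ⊆ A n ∧ (qmap (ε n) (A n) C).Nonempty ∧
          Metric.diam (qmap (ε n) (A n) C) < 4 * ε n) ∧
      (∀ n, ∀ C D : Set X, C ⊆ D → qmap (ε n) (A n) C ⊆ qmap (ε n) (A n) D) ∧
      ∀ n m, n ≤ m → ∀ C : Set X, C ⊆ B (I m) → C.Nonempty →
        Metric.diam C < 4 * δ (I m) →
        (qmap (ε n) (A n) (qdown δ B (I n) (I m - I n) C) ∪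
            qdown ε A n (m - n) (qmap (ε m) (A m) C)) ⊆ A n ∧
        (qmap (ε n) (A n) (qdown δ B (I n) (I m - I n) C) ∪
            qdown ε A n (m - n) (qmap (ε m) (A m) C)).Nonempty ∧
        Metric.diam (qmap (ε n) (A n) (qdown δ B (I n) (I m - I n) C) ∪
            qdown ε A n (m - n) (qmap (ε m) (A m) C)) < 4 * ε n := by
  have hεhalf := two_mul_succ_le_of_lt_half_sub_isLUB hγ hrec
  have hδhalf := two_mul_succ_le_of_lt_half_sub_isLUB hγ' hrec'
  have hεanti : Antitone ε :=
    antitone_nat_of_succ_le fun j => by linarith [hεhalf j, hεpos (j + 1)]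
  have hImono : Monotone I :=
    monotone_of_isLeast_lt (fun _ _ h => div_le_div_of_nonneg_right (hεanti h) (by norm_num)) hI
  have hδε : ∀ n, 2 * δ (I n) ≤ ε n := fun n => by linarith [(hI n).1, hεpos n]
  refine ⟨fun n C hCB hC hCdiam => ⟨qmap_subset _ _ _, qmap_nonempty (hApprox n) hC, ?_⟩,
    fun n => qmap_mono_s19 _ _, fun n m hnm C hCB hC hCdiam => ⟨?_, ?_, ?_⟩⟩
  · have := diam_qmap_le (A := A n) ((hBfin _).subset hCB).isBounded (hεpos n).le
    linarith [(hI n).1, hεpos n]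
  · exact union_subset (qmap_subset _ _ _) (qdown_subset (by
      rw [Nat.add_sub_cancel' hnm]; exact qmap_subset _ _ _))
  · exact (qmap_nonempty (hApprox n) (qdown_nonempty hBApprox _ _ hC)).inl
  · exact diam_qmap_qdown_union_qdown_qmap_lt hεhalf hδhalf hnm (hImono hnm) (hεanti hnm)
      (hδε n) (hδε m) ((hBfin _).subset hCB).isBounded hCdiam

/-- Uniqueness of FASO up to pro-homotopy: given two FASOs `(U_{4ε_n}(A_n), q)` and
`(U_{4δ_n}(B_n), q')` for the same compact metric space `X`, with
`I(n) = min { l : δ_l < ε_n/16 }`, the maps `I_n(C) = ⋃_{x∈C} B(x,ε_n) ∩ A_n` from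
`U_{4δ_{I(n)}}(B_{I(n)})` to `U_{4ε_n}(A_n)` are well-defined and monotone (hence
continuous for the Alexandroff topologies of reverse inclusion), and for `m ≥ n` the
maps `I_n ∘ q'_{I(n),I(m)}` and `q_{n,m} ∘ I_m` are homotopic: their pointwise union is
a nonempty subset of `A_n` of diameter `< 4ε_n`, a common upper bound in the poset
`U_{4ε_n}(A_n)`. -/
theorem stmt_19 {X : Type*} [MetricSpace X] [CompactSpace X] [Nonempty X]
    (ε : ℕ → ℝ) (A : ℕ → Set X) (γ : ℕ → ℝ)
    (hεpos : ∀ n, 0 < ε n)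
    (hεlim : Filter.Tendsto ε Filter.atTop (nhds 0))
    (hAfin : ∀ n, (A n).Finite)
    (hApprox : ∀ n, ∀ x : X, ∃ a ∈ A n, dist x a < ε n)
    (hγ : ∀ n, IsLUB (Set.range fun x : X => Metric.infDist x (A n)) (γ n))
    (hrec : ∀ n, ε (n + 1) < (ε n - γ n) / 2)
    (δ : ℕ → ℝ) (B : ℕ → Set X) (γ' : ℕ → ℝ)
    (hδpos : ∀ n, 0 < δ n)
    (hδlim : Filter.Tendsto δ Filter.atTop (nhds 0))
    (hBfin : ∀ n, (B n).Finite)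
    (hBApprox : ∀ n, ∀ x : X, ∃ b ∈ B n, dist x b < δ n)
    (hγ' : ∀ n, IsLUB (Set.range fun x : X => Metric.infDist x (B n)) (γ' n))
    (hrec' : ∀ n, δ (n + 1) < (δ n - γ' n) / 2)
    (I : ℕ → ℕ)
    (hI : ∀ n, δ (I n) < ε n / 16 ∧ ∀ l, δ l < ε n / 16 → I n ≤ l) :
    (∀ n, ∀ C : Set X, C ⊆ B (I n) → C.Nonempty → Metric.diam C < 4 * δ (I n) →
        qmap (ε n) (A n) C ⊆ A n ∧ (qmap (ε n) (A n) C).Nonempty ∧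
          Metric.diam (qmap (ε n) (A n) C) < 4 * ε n) ∧
      (∀ n, ∀ C D : Set X, C ⊆ D → qmap (ε n) (A n) C ⊆ qmap (ε n) (A n) D) ∧
      ∀ n m, n ≤ m → ∀ C : Set X, C ⊆ B (I m) → C.Nonempty →
        Metric.diam C < 4 * δ (I m) →
        (qmap (ε n) (A n) (qdown δ B (I n) (I m - I n) C) ∪
            qdown ε A n (m - n) (qmap (ε m) (A m) C)) ⊆ A n ∧
        (qmap (ε n) (A n) (qdown δ B (I n) (I m - I n) C) ∪
            qdown ε A n (m - n) (qmap (ε m) (A m) C)).Nonempty ∧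
        Metric.diam (qmap (ε n) (A n) (qdown δ B (I n) (I m - I n) C) ∪
            qdown ε A n (m - n) (qmap (ε m) (A m) C)) < 4 * ε n :=
  stmt_19_general ε A γ hεpos hApprox hγ hrec δ B γ' hBfin hBApprox hγ' hrec' I hI
end
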